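/- Let Σ be a d-collapsible simplicial complex on [n] and E ⊆ [n] such that every facet of Σ containing E has dimension at most d−1. Then the complex Σ∖E obtained by removing from Σ all faces containing E is d-collapsible. -/

import Mathlib

namespace ChordalPaper

/-- A simplicial complex on vertex set `Fin n`: a family of finsets closed under subsets. -/
def IsComplex {n : ℕ} (Γ : Set (Finset (Fin n))) : Prop :=
  ∀ F ∈ Γ, ∀ F' ⊆ F, F' ∈ Γ

/-- The `d`-closure `Δ_d(Γ)`: all subsets of size `≤ d`, together with all subsets
all of whose `(d+1)`-element subsets are faces of `Γ`. -/
def dClosure {n : ℕ} (d : ℕ) (Γ : Set (Finset (Fin n))) : Set (Finset (Fin n)) :=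
  {F | F.card ≤ d ∨ ∀ G ⊆ F, G.card = d + 1 → G ∈ Γ}

/-- The pure `(d-1)`-skeleton `⟨[n]⟩^{[d-1]}` of the full simplex: all subsets of size `≤ d`. -/
def fullSkel (n d : ℕ) : Set (Finset (Fin n)) := {F | F.card ≤ d}

/-- A facet: a maximal face. -/
def IsFacet {n : ℕ} (Γ : Set (Finset (Fin n))) (F : Finset (Fin n)) : Prop :=
  F ∈ Γ ∧ ∀ G ∈ Γ, F ⊆ G → G = F

/-- A free face: a face contained in a unique facet. -/
def IsFreeFace {n : ℕ} (Γ : Set (Finset (Fin n))) (E : Finset (Fin n)) : Prop :=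
  E ∈ Γ ∧ ∃! F, IsFacet Γ F ∧ E ⊆ F

/-- Collapse at `E`: remove all faces containing `E` (including `E` itself). -/
def collapseFace {n : ℕ} (Γ : Set (Finset (Fin n))) (E : Finset (Fin n)) :
    Set (Finset (Fin n)) := {F ∈ Γ | ¬ E ⊆ F}

/-- Successive collapses along a list of faces. -/
def collapseList {n : ℕ} (Γ : Set (Finset (Fin n))) :
    List (Finset (Fin n)) → Set (Finset (Fin n))
  | [] => Γ
  | E :: L => collapseList (collapseFace Γ E) L

/-- A free sequence: each face is free in the complex obtained by collapsing the previous ones. -/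
def IsFreeSeq {n : ℕ} (Γ : Set (Finset (Fin n))) : List (Finset (Fin n)) → Prop
  | [] => True
  | E :: L => IsFreeFace Γ E ∧ IsFreeSeq (collapseFace Γ E) L

/-- `d`-collapsibility: a sequence of elementary `d`-collapsings (at free faces of
dimension `< d`, i.e. cardinality `≤ d`) reduces `Γ` to the void complex. -/
def Collapsible {n : ℕ} (d : ℕ) (Γ : Set (Finset (Fin n))) : Prop :=
  ∃ L : List (Finset (Fin n)),
    IsFreeSeq Γ L ∧ (∀ E ∈ L, E.card ≤ d) ∧ collapseList Γ L = ∅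

/-- Simplicial deletion `Γ∖E`: remove all faces strictly containing `E` (keeping `E`). -/
def srDel {n : ℕ} (Γ : Set (Finset (Fin n))) (E : Finset (Fin n)) :
    Set (Finset (Fin n)) := {F ∈ Γ | ¬ E ⊂ F}

/-- Successive simplicial deletions along a list of faces. -/
def srDelList {n : ℕ} (Γ : Set (Finset (Fin n))) :
    List (Finset (Fin n)) → Set (Finset (Fin n))
  | [] => Γ
  | E :: L => srDelList (srDel Γ E) L

/-- A simplicial order for a `d`-closure on `Fin n`: a sequence of non-facet free faces of
cardinality `d` whose successive simplicial deletions reduce the complex to the pure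
`(d-1)`-skeleton of the full simplex. -/
def IsSimpOrder {n : ℕ} (d : ℕ) (Γ : Set (Finset (Fin n))) :
    List (Finset (Fin n)) → Prop
  | [] => Γ = fullSkel n d
  | E :: L => E.card = d ∧ IsFreeFace Γ E ∧ ¬ IsFacet Γ E ∧ IsSimpOrder d (srDel Γ E) L

/-- `Γ` is `d`-chordal: its `d`-closure equals the pure `(d-1)`-skeleton of the full
simplex or admits a simplicial order. -/
def DChordal {n : ℕ} (d : ℕ) (Γ : Set (Finset (Fin n))) : Prop :=
  ∃ L, IsSimpOrder d (dClosure d Γ) L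

/-- A minimal nonface of `Γ`. -/
def IsMinNonface {n : ℕ} (Γ : Set (Finset (Fin n))) (F : Finset (Fin n)) : Prop :=
  F ∉ Γ ∧ ∀ G ⊂ F, G ∈ Γ

end ChordalPaper

/-!
Induct on a `d`-collapse sequence of `Σ`; let its first step collapse the free face `E₁`, lying in
the unique facet `F₁`. If `E ⊄ F₁`, then `E₁` is still free in `Σ∖E` and the two collapses commute.
If `E ⊆ F₁`, then `|F₁| ≤ d` by hypothesis, so the faces of `Σ∖E` between `E₁` and `F₁` all have
size `≤ d`, and they can be collapsed away one at a time from the top, each being a facet of what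
remains. Either way `Σ∖E` collapses to `(Σ∖E₁)∖E`, which is `d`-collapsible by induction.
-/

namespace ChordalPaper

variable {n d : ℕ}

def CollapsesTo (d : ℕ) (Γ Γ' : Set (Finset (Fin n))) : Prop :=
  ∃ L : List (Finset (Fin n)), IsFreeSeq Γ L ∧ (∀ E ∈ L, E.card ≤ d) ∧ collapseList Γ L = Γ'

theorem collapsible_iff_collapsesTo_empty {Γ : Set (Finset (Fin n))} :
    Collapsible d Γ ↔ CollapsesTo d Γ ∅ := Iff.rfl

theorem collapseList_append (Γ : Set (Finset (Fin n))) (L₁ L₂ : List (Finset (Fin n))) :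
    collapseList Γ (L₁ ++ L₂) = collapseList (collapseList Γ L₁) L₂ := by
  induction L₁ generalizing Γ with
  | nil => rfl
  | cons E L ih => exact ih _

theorem IsFreeSeq.append {Γ : Set (Finset (Fin n))} {L₁ L₂ : List (Finset (Fin n))}
    (h₁ : IsFreeSeq Γ L₁) (h₂ : IsFreeSeq (collapseList Γ L₁) L₂) :
    IsFreeSeq Γ (L₁ ++ L₂) := by
  induction L₁ generalizing Γ with
  | nil => exact h₂
  | cons E L ih => exact ⟨h₁.1, ih h₁.2 h₂⟩

namespace CollapsesTo

theorem refl (Γ : Set (Finset (Fin n))) : CollapsesTo d Γ Γ :=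
  ⟨[], trivial, by simp, rfl⟩

theorem trans {Γ₁ Γ₂ Γ₃ : Set (Finset (Fin n))} (h₁₂ : CollapsesTo d Γ₁ Γ₂)
    (h₂₃ : CollapsesTo d Γ₂ Γ₃) : CollapsesTo d Γ₁ Γ₃ := by
  obtain ⟨L₁, hfree₁, hcard₁, rfl⟩ := h₁₂
  obtain ⟨L₂, hfree₂, hcard₂, rfl⟩ := h₂₃
  refine ⟨L₁ ++ L₂, hfree₁.append hfree₂, fun E hE => ?_, collapseList_append _ _ _⟩
  rcases List.mem_append.mp hE with h | h
  exacts [hcard₁ E h, hcard₂ E h]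

theorem collapseFace {Γ : Set (Finset (Fin n))} {E : Finset (Fin n)} (hE : IsFreeFace Γ E)
    (hcard : E.card ≤ d) : CollapsesTo d Γ (collapseFace Γ E) :=
  ⟨[E], ⟨hE, trivial⟩, by simpa using hcard, rfl⟩

end CollapsesTo

theorem IsComplex.collapseFace {Γ : Set (Finset (Fin n))} (h : IsComplex Γ)
    (E : Finset (Fin n)) : IsComplex (collapseFace Γ E) :=
  fun F hF F' hF' => ⟨h F hF.1 F' hF', fun hE => hF.2 (hE.trans hF')⟩

theorem collapseFace_comm (Γ : Set (Finset (Fin n))) (E E' : Finset (Fin n)) :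
    collapseFace (collapseFace Γ E) E' = collapseFace (collapseFace Γ E') E := by
  ext F
  simp only [ChordalPaper.collapseFace, Set.mem_ofPred_eq]
  tauto

theorem exists_isFacet_superset {Γ : Set (Finset (Fin n))} {G : Finset (Fin n)} (hG : G ∈ Γ) :
    ∃ F, IsFacet Γ F ∧ G ⊆ F := by
  obtain ⟨F, ⟨hF, hGF⟩, hmax⟩ :=
    Set.exists_max_image {F | F ∈ Γ ∧ G ⊆ F} Finset.card (Set.toFinite _) ⟨G, hG, subset_rfl⟩
  refine ⟨F, ⟨hF, fun H hH hFH => ?_⟩, hGF⟩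
  exact (Finset.eq_of_subset_of_card_le hFH (hmax H ⟨hH, hGF.trans hFH⟩)).symm

theorem subset_of_unique_facet {Γ : Set (Finset (Fin n))} {E F₀ : Finset (Fin n)}
    (huniq : ∀ F, IsFacet Γ F ∧ E ⊆ F → F = F₀) {G : Finset (Fin n)} (hG : G ∈ Γ)
    (hEG : E ⊆ G) : G ⊆ F₀ := by
  obtain ⟨F, hF, hGF⟩ := exists_isFacet_superset hG
  exact huniq F ⟨hF, hEG.trans hGF⟩ ▸ hGF

theorem isFreeFace_of_forall_superset_eq {Γ : Set (Finset (Fin n))} {G : Finset (Fin n)}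
    (hG : G ∈ Γ) (htop : ∀ F ∈ Γ, G ⊆ F → F = G) : IsFreeFace Γ G :=
  ⟨hG, G, ⟨⟨hG, htop⟩, subset_rfl⟩, fun F ⟨hF, hGF⟩ => htop F hF.1 hGF⟩

theorem collapseFace_eq_diff_singleton {Γ : Set (Finset (Fin n))} {G : Finset (Fin n)}
    (htop : ∀ F ∈ Γ, G ⊆ F → F = G) : collapseFace Γ G = Γ \ {G} := by
  ext F
  refine and_congr_right fun hF => not_congr ⟨htop F hF, ?_⟩
  rintro rfl
  exact subset_rfl

/-- Removing the faces in `A` top-down is a collapse sequence, each removed face being a facet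
of what remains. -/
theorem collapsesTo_diff_of_upwardClosed (A : Finset (Finset (Fin n)))
    {Γ : Set (Finset (Fin n))} (hAΓ : ∀ G ∈ A, G ∈ Γ)
    (hup : ∀ G ∈ A, ∀ F ∈ Γ, G ⊂ F → F ∈ A) (hcard : ∀ G ∈ A, G.card ≤ d) :
    CollapsesTo d Γ (Γ \ A) := by
  induction A using Finset.strongInduction generalizing Γ with
  | H A ih =>
  rcases A.eq_empty_or_nonempty with rfl | hne
  · simpa using CollapsesTo.refl Γ
  obtain ⟨G, hGA, hGmax⟩ := A.exists_max_image Finset.card hne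
  have htop : ∀ F ∈ Γ, G ⊆ F → F = G := fun F hF hGF => by
    by_contra hFG
    have hGF : G ⊂ F := hGF.ssubset_of_ne (Ne.symm hFG)
    exact (Finset.card_lt_card hGF).not_ge (hGmax F (hup G hGA F hF hGF))
  have hrest : CollapsesTo d (Γ \ {G}) ((Γ \ {G}) \ ↑(A.erase G)) :=
    ih _ (A.erase_ssubset hGA)
      (fun G' hG' => ⟨hAΓ G' (A.mem_of_mem_erase hG'), Finset.ne_of_mem_erase hG'⟩)
      (fun G' hG' F hF hG'F =>
        Finset.mem_erase.mpr ⟨hF.2, hup G' (A.mem_of_mem_erase hG') F hF.1 hG'F⟩)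
      (fun G' hG' => hcard G' (A.mem_of_mem_erase hG'))
  have hdiff : (Γ \ {G}) \ ↑(A.erase G) = Γ \ A := by
    rw [Set.sdiff_sdiff, Finset.coe_erase, Set.union_sdiff_cancel (by simpa using hGA)]
  rw [hdiff, ← collapseFace_eq_diff_singleton htop] at hrest
  exact (CollapsesTo.collapseFace (isFreeFace_of_forall_superset_eq (hAΓ G hGA) htop)
    (hcard G hGA)).trans hrest

section Step

variable {S : Set (Finset (Fin n))} {E E₁ F₁ : Finset (Fin n)}

theorem isFreeFace_collapseFace_of_not_subset_facet (hfree : IsFreeFace S E₁)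
    (hF₁ : IsFacet S F₁) (hE₁F₁ : E₁ ⊆ F₁) (hEF₁ : ¬ E ⊆ F₁) :
    IsFreeFace (collapseFace S E) E₁ := by
  obtain ⟨hE₁, F₀, hF₀, huniq⟩ := hfree
  obtain rfl : F₁ = F₀ := huniq F₁ ⟨hF₁, hE₁F₁⟩
  have hF₁mem : F₁ ∈ collapseFace S E := ⟨hF₁.1, hEF₁⟩
  refine ⟨⟨hE₁, fun h => hEF₁ (h.trans hE₁F₁)⟩, F₁,
    ⟨⟨hF₁mem, fun G hG => hF₁.2 G hG.1⟩, hE₁F₁⟩, ?_⟩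
  rintro G ⟨hG, hE₁G⟩
  exact (hG.2 F₁ hF₁mem (subset_of_unique_facet huniq hG.1.1 hE₁G)).symm

/-- The faces of `Σ∖E` not surviving in `(Σ∖E₁)∖E` are those between `E₁` and `F₁` that do not
contain `E`; they all have size at most `|F₁|`. -/
theorem collapsesTo_collapseFace_of_subset_facet (hS : IsComplex S) (hfree : IsFreeFace S E₁)
    (hF₁ : IsFacet S F₁) (hE₁F₁ : E₁ ⊆ F₁) (hF₁card : F₁.card ≤ d) :
    CollapsesTo d (collapseFace S E) (collapseFace (collapseFace S E₁) E) := by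
  classical
  obtain ⟨-, F₀, hF₀, huniq⟩ := hfree
  obtain rfl : F₁ = F₀ := huniq F₁ ⟨hF₁, hE₁F₁⟩
  have hsub : ∀ {G}, G ∈ S → E₁ ⊆ G → G ⊆ F₁ := subset_of_unique_facet huniq
  let A := F₁.powerset.filter fun G => E₁ ⊆ G ∧ ¬ E ⊆ G
  have hmemA : ∀ G, G ∈ A ↔ G ⊆ F₁ ∧ E₁ ⊆ G ∧ ¬ E ⊆ G := by simp [A]
  have hdiff : collapseFace S E \ ↑A = collapseFace (collapseFace S E₁) E := by
    ext F
    simp only [ChordalPaper.collapseFace, Set.mem_sdiff, Finset.mem_coe, hmemA,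
      Set.mem_ofPred_eq]
    constructor
    · rintro ⟨⟨hF, hEF⟩, hFA⟩
      exact ⟨⟨hF, fun hE₁F => hFA ⟨hsub hF hE₁F, hE₁F, hEF⟩⟩, hEF⟩
    · rintro ⟨⟨hF, hE₁F⟩, hEF⟩
      exact ⟨⟨hF, hEF⟩, fun h => hE₁F h.2.1⟩
  rw [← hdiff]
  refine collapsesTo_diff_of_upwardClosed A (fun G hG => ?_) (fun G hG F hF hGF => ?_)
    (fun G hG => (Finset.card_le_card ((hmemA G).mp hG).1).trans hF₁card)
  · obtain ⟨hGF₁, -, hEG⟩ := (hmemA G).mp hG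
    exact ⟨hS F₁ hF₁.1 G hGF₁, hEG⟩
  · have hE₁F : E₁ ⊆ F := ((hmemA G).mp hG).2.1.trans hGF.subset
    exact (hmemA F).mpr ⟨hsub hF.1 hE₁F, hE₁F, hF.2⟩

theorem collapsesTo_collapseFace_collapseFace (hS : IsComplex S) (hfree : IsFreeFace S E₁)
    (hE₁card : E₁.card ≤ d) (hfac : ∀ F, IsFacet S F → E ⊆ F → F.card ≤ d) :
    CollapsesTo d (collapseFace S E) (collapseFace (collapseFace S E₁) E) := by
  obtain ⟨F₁, ⟨hF₁, hE₁F₁⟩, -⟩ := hfree.2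
  by_cases hEF₁ : E ⊆ F₁
  · exact collapsesTo_collapseFace_of_subset_facet hS hfree hF₁ hE₁F₁ (hfac F₁ hF₁ hEF₁)
  · rw [collapseFace_comm]
    exact CollapsesTo.collapseFace
      (isFreeFace_collapseFace_of_not_subset_facet hfree hF₁ hE₁F₁ hEF₁) hE₁card

end Step

theorem Collapsible.collapseFace_of_forall_isFacet_card_le {S : Set (Finset (Fin n))}
    (hS : IsComplex S) (hcol : Collapsible d S) (E : Finset (Fin n))
    (hfac : ∀ F, IsFacet S F → E ⊆ F → F.card ≤ d) :
    Collapsible d (collapseFace S E) := by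
  obtain ⟨L, hfree, hcard, hempty⟩ := hcol
  induction L generalizing S with
  | nil =>
    subst hempty
    rw [collapsible_iff_collapsesTo_empty, ChordalPaper.collapseFace, Set.sep_empty]
    exact CollapsesTo.refl _
  | cons E₁ L ih =>
    have hsmall : ∀ F, IsFacet (collapseFace S E₁) F → E ⊆ F → F.card ≤ d :=
      fun F hF hEF => by
        obtain ⟨F', hF', hFF'⟩ := exists_isFacet_superset hF.1.1
        exact (Finset.card_le_card hFF').trans (hfac F' hF' (hEF.trans hFF'))
    exact (collapsesTo_collapseFace_collapseFace hS hfree.1 (hcard E₁ List.mem_cons_self)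
      hfac).trans (ih (hS.collapseFace E₁) hsmall hfree.2 (fun E' h => hcard E' (List.mem_cons_of_mem _ h))
        hempty)

end ChordalPaper

open ChordalPaper in
theorem stmt6_general (n d : ℕ) (S : Set (Finset (Fin n))) (hS : IsComplex S)
    (hcol : Collapsible d S) (E : Finset (Fin n))
    (hfac : ∀ F, IsFacet S F → E ⊆ F → F.card ≤ d) :
    Collapsible d {F ∈ S | ¬ E ⊆ F} :=
  hcol.collapseFace_of_forall_isFacet_card_le hS E hfac

open ChordalPaper in
/-- if every facet of a `d`-collapsible complex `Σ` containing `E` has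
dimension `≤ d-1`, then removing all faces containing `E` preserves `d`-collapsibility. -/
theorem stmt6 (n d : ℕ) (hd : 1 ≤ d) (S : Set (Finset (Fin n))) (hS : IsComplex S)
    (hcol : Collapsible d S) (E : Finset (Fin n))
    (hfac : ∀ F, IsFacet S F → E ⊆ F → F.card ≤ d) :
    Collapsible d {F ∈ S | ¬ E ⊆ F} :=
  stmt6_general n d S hS hcol E hfac
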